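/- Let ζ ∈ ℂ be a primitive 9th root of unity, F = X^4 + X·Z^3 + Y^3·Z, and σ: [x:y:z] ↦ [x:ζ^2 y:ζ^3 z] the induced automorphism of the curve C = {F = 0} ⊂ ℙ^2(ℂ). Then the restriction of σ to C generates a faithful action of ℤ/9ℤ on C: for every integer n with 1 ≤ n ≤ 8 there exists a nonzero (x,y,z) ∈ ℂ^3 with F(x,y,z) = 0 such that [x : ζ^{2n} y : ζ^{3n} z] ≠ [x : y : z] in ℙ^2(ℂ). -/
import Mathlib


/-- The automorphism `σ : [x:y:z] ↦ [x : ζ²y : ζ³z]` of the curve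
`C = {X^4 + X·Z^3 + Y^3·Z = 0} ⊂ ℙ²(ℂ)` generates a faithful `ℤ/9ℤ`-action:
for every `1 ≤ n ≤ 8` there is a point of `C` moved by `σ^n`. -/
theorem sigma_action_faithful (ζ : ℂ) (hζ : IsPrimitiveRoot ζ 9) :
    ∀ n : ℕ, 1 ≤ n → n ≤ 8 →
      ∃ (x y z : ℂ) (hv : ![x, y, z] ≠ 0)
        (hv' : ![x, ζ ^ (2 * n) * y, ζ ^ (3 * n) * z] ≠ 0),
        x ^ 4 + x * z ^ 3 + y ^ 3 * z = 0 ∧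
        Projectivization.mk ℂ ![x, ζ ^ (2 * n) * y, ζ ^ (3 * n) * z] hv' ≠
          Projectivization.mk ℂ ![x, y, z] hv := by
  intro n hn1 hn8
  obtain ⟨y, hy⟩ : ∃ y : ℂ, y ^ 3 = -2 := by
    obtain ⟨y, hy⟩ := Complex.isAlgClosed.exists_pow_nat_eq (-2) (n := 3) (by norm_num)
    exact ⟨y, hy⟩
  have hy0 : y ≠ 0 := by
    intro h; rw [h] at hy; norm_num at hy
  have hv : ![(1 : ℂ), y, 1] ≠ 0 := by
    intro h
    have := congrFun h 0
    simp at this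
  have hv' : ![(1 : ℂ), ζ ^ (2 * n) * y, ζ ^ (3 * n) * 1] ≠ 0 := by
    intro h
    have := congrFun h 0
    simp at this
  refine ⟨1, y, 1, hv, hv', by rw [hy]; ring, ?_⟩
  intro h
  rw [Projectivization.mk_eq_mk_iff] at h
  obtain ⟨a, ha⟩ := h
  have h0 := congrFun ha 0
  have h1 := congrFun ha 1
  simp [Units.smul_def] at h0 h1
  have hz : ζ ^ (2 * n) = 1 := by
    rcases h1 with h1 | h1
    · rw [h0] at h1; exact_mod_cast h1.symm
    · exact absurd h1 hy0
  have := (hζ.pow_eq_one_iff_dvd (2 * n)).mp hz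
  omega
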